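/- Let k ≥ 2, let n be even with n ≥ 3k+1, and let x satisfy 2k ≤ x ≤ n-k-1 with the appropriate parity so that (n-2k)(x-2k) is even. Then the sequence (n-k-1, …, n-k-1, x-k, …, x-k) of length n-k, with k copies of n-k-1 and n-2k copies of x-k, is graphic. -/

import Mathlib

/-!
Split the `n - k` vertices into a clique `K` of size `k` and a set of `m = n - 2k` further
vertices carrying a `d`-regular graph, `d = x - 2k`, and join `K` to everything. A vertex of `K`
then has degree `(k - 1) + m = n - k - 1` and any other vertex has degree `k + d = x - k`. The
`d`-regular graph on `m` vertices exists because `d < m` and `m d` is even: take the circulant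
graph on `ZMod m` with jumps `±1, …, ±⌊d/2⌋`, plus the antipodal jump `m/2` when `d` is odd.
-/

/-- A finite list of naturals is graphic if it is realized as the degree sequence of a
simple graph. -/
def IsGraphicList (l : List ℕ) : Prop :=
  ∃ (G : SimpleGraph (Fin l.length)) (_ : DecidableRel G.Adj), ∀ i, G.degree i = l.get i

open Finset

namespace SimpleGraph

variable {V W : Type*}

lemma degree_sum_inl (G : SimpleGraph V) (H : SimpleGraph W) (v : V) [Fintype (G.neighborSet v)]
    [Fintype ((G ⊕g H).neighborSet (.inl v))] : (G ⊕g H).degree (.inl v) = G.degree v := by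
  simp only [← card_neighborSet_eq_degree, ← Nat.card_eq_fintype_card, neighborSet_sum_inl,
    Nat.card_image_of_injective Sum.inl_injective]

lemma degree_sum_inr (G : SimpleGraph V) (H : SimpleGraph W) (w : W) [Fintype (H.neighborSet w)]
    [Fintype ((G ⊕g H).neighborSet (.inr w))] : (G ⊕g H).degree (.inr w) = H.degree w := by
  simp only [← card_neighborSet_eq_degree, ← Nat.card_eq_fintype_card, neighborSet_sum_inr,
    Nat.card_image_of_injective Sum.inr_injective]

/-- The join of `G` and `H`: their disjoint union together with every edge between `V` and `W`. -/
abbrev join (G : SimpleGraph V) (H : SimpleGraph W) : SimpleGraph (V ⊕ W) := (Gᶜ ⊕g Hᶜ)ᶜ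

section join

variable [Fintype V] [Fintype W] (G : SimpleGraph V) (H : SimpleGraph W)

lemma degree_join_inl [DecidableRel G.Adj] (v : V) [Fintype ((G.join H).neighborSet (.inl v))] :
    (G.join H).degree (.inl v) = G.degree v + Fintype.card W := by
  classical
  have := G.degree_lt_card_verts v
  rw [degree_compl, degree_sum_inl, degree_compl, Fintype.card_sum]
  omega

lemma degree_join_inr [DecidableRel H.Adj] (w : W) [Fintype ((G.join H).neighborSet (.inr w))] :
    (G.join H).degree (.inr w) = Fintype.card V + H.degree w := by
  classical
  have := H.degree_lt_card_verts w
  rw [degree_compl, degree_sum_inr, degree_compl, Fintype.card_sum]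
  omega

end join

lemma degree_circulantGraph {A : Type*} [AddGroup A] {s : Finset A} (hs0 : 0 ∉ s)
    (hs : ∀ a ∈ s, -a ∈ s) (v : A) [Fintype ((circulantGraph (s : Set A)).neighborSet v)] :
    (circulantGraph (s : Set A)).degree v = #s := by
  have hnbr : (circulantGraph (s : Set A)).neighborSet v = (· + v) '' s := by
    ext w
    simp only [mem_neighborSet, circulantGraph_adj, Set.mem_image, SetLike.mem_coe]
    constructor
    · rintro ⟨-, h | h⟩
      · exact ⟨w - v, by simpa using hs _ h, sub_add_cancel w v⟩
      · exact ⟨w - v, h, sub_add_cancel w v⟩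
    · rintro ⟨a, ha, rfl⟩
      refine ⟨fun h => hs0 ?_, Or.inr (by simpa using ha)⟩
      rwa [← add_eq_right.mp h.symm]
  rw [← card_neighborSet_eq_degree, ← Nat.card_eq_fintype_card, hnbr,
    Nat.card_image_of_injective (add_left_injective v), coe_sort_coe, Nat.card_eq_finsetCard]

end SimpleGraph

lemma exists_finset_sub_mem_of_lt {m d : ℕ} (hd : d < m) (he : Even (m * d)) :
    ∃ T : Finset ℕ, (∀ i ∈ T, 0 < i ∧ i < m ∧ m - i ∈ T) ∧ #T = d := by
  obtain ⟨r, hr⟩ : ∃ r, d = 2 * r ∨ d = 2 * r + 1 := Nat.even_or_odd' d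
  set U := Icc 1 r ∪ Icc (m - r) (m - 1)
  have hmemU : ∀ i, i ∈ U ↔ (1 ≤ i ∧ i ≤ r) ∨ (m - r ≤ i ∧ i ≤ m - 1) := by
    simp [U]
  have hcardU : #U = 2 * r := by
    have hdisj : Disjoint (Icc 1 r) (Icc (m - r) (m - 1)) :=
      disjoint_left.2 fun i hi hi' => by simp only [mem_Icc] at hi hi'; omega
    rw [card_union_of_disjoint hdisj, Nat.card_Icc, Nat.card_Icc]
    omega
  rcases hr with rfl | rfl
  · exact ⟨U, fun i hi => by simp only [hmemU] at hi ⊢; omega, hcardU⟩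
  · obtain ⟨p, rfl⟩ : Even m := (Nat.even_mul.mp he).resolve_right (by simp)
    have hp : p ∉ U := by rw [hmemU]; omega
    refine ⟨insert p U, fun i hi => ?_, by rw [card_insert_of_notMem hp, hcardU]⟩
    simp only [mem_insert, hmemU] at hi ⊢
    omega

lemma ZMod.exists_finset_neg_mem {m d : ℕ} (hd : d < m) (he : Even (m * d)) :
    ∃ s : Finset (ZMod m), 0 ∉ s ∧ (∀ a ∈ s, -a ∈ s) ∧ #s = d := by
  obtain ⟨T, hT, rfl⟩ := exists_finset_sub_mem_of_lt hd he
  have hval : ∀ i ∈ T, (i : ZMod m).val = i := fun i hi => ZMod.val_cast_of_lt (hT i hi).2.1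
  refine ⟨T.image Nat.cast, ?_, ?_, card_image_of_injOn fun i hi j hj hij => ?_⟩
  · simp only [mem_image, not_exists, not_and]
    intro i hi h
    have := hval i hi
    rw [h, ZMod.val_zero] at this
    exact (hT i hi).1.ne this
  · simp only [mem_image]
    rintro _ ⟨i, hi, rfl⟩
    refine ⟨m - i, (hT i hi).2.2, ?_⟩
    rw [Nat.cast_sub (hT i hi).2.1.le, ZMod.natCast_self, zero_sub]
  · rw [← hval i hi, ← hval j hj, hij]

lemma ZMod.exists_isRegularOfDegree {m d : ℕ} [NeZero m] (hd : d < m) (he : Even (m * d)) :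
    ∃ (H : SimpleGraph (ZMod m)) (_ : DecidableRel H.Adj), H.IsRegularOfDegree d := by
  classical
  obtain ⟨s, hs0, hs, rfl⟩ := ZMod.exists_finset_neg_mem hd he
  exact ⟨_, inferInstance, fun v => SimpleGraph.degree_circulantGraph hs0 hs v⟩

lemma isGraphicList_of_equiv {V : Type*} [Fintype V] (G : SimpleGraph V) [DecidableRel G.Adj]
    {l : List ℕ} (e : V ≃ Fin l.length) (h : ∀ v, G.degree v = l.get (e v)) :
    IsGraphicList l := by
  classical
  refine ⟨G.map e.toEmbedding, inferInstance, fun i => ?_⟩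
  obtain ⟨v, rfl⟩ := e.surjective i
  rw [← h v]
  exact (SimpleGraph.Iso.map e G).degree_eq v

lemma isGraphicList_replicate_append {α β : Type*} [Fintype α] [Fintype β]
    (G : SimpleGraph (α ⊕ β)) [DecidableRel G.Adj] {p q : ℕ}
    (hp : ∀ a, G.degree (.inl a) = p) (hq : ∀ b, G.degree (.inr b) = q) :
    IsGraphicList (List.replicate (Fintype.card α) p ++ List.replicate (Fintype.card β) q) := by
  refine isGraphicList_of_equiv G ((Fintype.equivFin α).sumCongr (Fintype.equivFin β) |>.trans
    finSumFinEquiv |>.trans (finCongr (by simp))) ?_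
  rintro (a | b)
  · simp [hp, List.getElem_append_left]
  · simp [hq, List.getElem_append_right]

theorem seq_ks_minus_graphic_general {n k x : ℕ} (hnk : 3 * k + 1 ≤ n)
    (hx1 : 2 * k ≤ x) (hx2 : x ≤ n - k - 1)
    (hpar : Even ((n - 2 * k) * (x - 2 * k))) :
    IsGraphicList
      (List.replicate k (n - k - 1) ++ List.replicate (n - 2 * k) (x - k)) := by
  classical
  have : NeZero (n - 2 * k) := ⟨by omega⟩
  obtain ⟨H, _, hH⟩ := ZMod.exists_isRegularOfDegree (m := n - 2 * k) (by omega) hpar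
  have := isGraphicList_replicate_append ((⊤ : SimpleGraph (Fin k)).join H)
    (p := n - k - 1) (q := x - k)
    (fun a => by
      rw [SimpleGraph.degree_join_inl, SimpleGraph.complete_graph_degree, Fintype.card_fin,
        ZMod.card]
      have := a.pos
      omega)
    (fun b => by
      rw [SimpleGraph.degree_join_inr, hH.degree_eq, Fintype.card_fin]
      omega)
  simpa using this

/-- For `k ≥ 2`, `n` even with `n ≥ 3k+1`, and `2k ≤ x ≤ n-k-1` with `(n-2k)(x-2k)`
even, the sequence with `k` copies of `n-k-1` followed by `n-2k` copies of `x-k`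
(length `n-k`) is graphic. -/
theorem seq_ks_minus_graphic {n k x : ℕ} (hk : 2 ≤ k) (hn : Even n) (hnk : 3 * k + 1 ≤ n)
    (hx1 : 2 * k ≤ x) (hx2 : x ≤ n - k - 1)
    (hpar : Even ((n - 2 * k) * (x - 2 * k))) :
    IsGraphicList
      (List.replicate k (n - k - 1) ++ List.replicate (n - 2 * k) (x - k)) :=
  seq_ks_minus_graphic_general hnk hx1 hx2 hpar
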